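/- arXiv:1909.12817 — 5 statements merged into one kernel-verified Lean document; each statement's English description precedes it below -/
import Mathlib

section
/- If two closed geodesics (non-backtracking closed walks) of length g in a graph G of girth g share a common subwalk of length ⌊g/2⌋ + 1, then they coincide. -/
/-!
Rotate both geodesics so that they start with the shared subwalk `l`; what remains of them are
two non-backtracking walks between the same endpoints, of total length
`2 (g - ⌊g/2⌋ - 1) < g`. If two such walks differed, then after cancelling their common initial
darts, one followed by the reverse of the other would be a nonempty non-backtracking closed walk
shorter than the girth; but such a walk always contains a cycle.
-/

open SimpleGraph List

/-- The list of darts of a walk is non-backtracking: no dart is immediately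
followed by its reverse. -/
def SimpleGraph.Walk.NonBacktracking {V : Type*} {G : SimpleGraph V} {u v : V}
    (w : G.Walk u v) : Prop :=
  w.darts.Chain' (fun d₁ d₂ => d₂ ≠ d₁.symm)

/-- A closed geodesic: a nonempty closed walk that is non-backtracking, including
at the basepoint (the first dart is not the reverse of the last dart). -/
def SimpleGraph.Walk.IsClosedGeodesic {V : Type*} {G : SimpleGraph V} {v : V}
    (w : G.Walk v v) : Prop :=
  w.darts ≠ [] ∧ w.darts.Chain' (fun d₁ d₂ => d₂ ≠ d₁.symm) ∧
    ∀ df ∈ w.darts.head?, ∀ dl ∈ w.darts.getLast?, df ≠ dl.symm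

theorem List.exists_eq_append_and_prefix_append_swap_of_infix_append_self {α : Type*}
    {l d : List α} (h : l <:+: d ++ d) (hl : l.length ≤ d.length) :
    ∃ s t, d = s ++ t ∧ l <+: t ++ s := by
  obtain ⟨a, b, hab⟩ := h
  rw [append_assoc] at hab
  rcases append_eq_append_iff.mp hab.symm with ⟨a', rfl, hd⟩ | ⟨c, hd, hlb⟩
  · exact ⟨a', l ++ b, hd, (prefix_append l b).trans (prefix_append _ a')⟩
  · refine ⟨a, c, hd, prefix_of_prefix_length_le ⟨b, hlb.trans ?_⟩ (prefix_append _ c) ?_⟩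
    · rw [hd, append_assoc]
    · simpa [hd, add_comm] using hl

namespace SimpleGraph.Walk

variable {V : Type*} {G : SimpleGraph V}

theorem nonBacktracking_iff {u v : V} {p : G.Walk u v} :
    p.NonBacktracking ↔ p.darts.IsChain (fun d₁ d₂ => d₂ ≠ d₁.symm) :=
  Iff.rfl

theorem NonBacktracking.of_darts_infix {u v x y : V} {p : G.Walk u v} {q : G.Walk x y}
    (hq : q.NonBacktracking) (h : p.darts <:+: q.darts) : p.NonBacktracking :=
  IsChain.infix hq h

theorem NonBacktracking.of_isSubwalk {u v x y : V} {p : G.Walk u v} {q : G.Walk x y}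
    (hq : q.NonBacktracking) (h : p.IsSubwalk q) : p.NonBacktracking :=
  hq.of_darts_infix h.darts_isInfix

theorem NonBacktracking.reverse {u v : V} {p : G.Walk u v} (hp : p.NonBacktracking) :
    p.reverse.NonBacktracking := by
  rw [nonBacktracking_iff, darts_reverse, isChain_reverse, isChain_map]
  exact hp.imp fun a b hab h => hab (by rw [h, Dart.symm_symm])

theorem NonBacktracking.append {u v w : V} {p : G.Walk u v} {q : G.Walk v w}
    (hp : p.NonBacktracking) (hq : q.NonBacktracking)
    (h : ∀ d ∈ p.darts.getLast?, ∀ d' ∈ q.darts.head?, d' ≠ d.symm) :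
    (p.append q).NonBacktracking := by
  rw [nonBacktracking_iff, darts_append]
  exact isChain_append.mpr ⟨hp, hq, h⟩

theorem IsPath.isCycle_cons_of_nonBacktracking {u v : V} {p : G.Walk v u} (hp : p.IsPath)
    (h : G.Adj u v) (hnb : (cons h p).NonBacktracking) : (cons h p).IsCycle := by
  refine (cons_isCycle_iff p h).mpr ⟨hp, fun he => ?_⟩
  have hlen : p.length = 1 := hp.length_eq_one_of_mem_edges (Sym2.eq_swap ▸ he)
  match p, hlen with
  | cons _ .nil, _ => simp [nonBacktracking_iff] at hnb

theorem NonBacktracking.isPath_or_exists_isCycle {u v : V} {p : G.Walk u v}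
    (hp : p.NonBacktracking) :
    p.IsPath ∨ ∃ (x : V) (c : G.Walk x x), c.IsCycle ∧ c.IsSubwalk p := by
  classical
  induction p with
  | nil => exact Or.inl .nil
  | @cons u v w h p ih =>
    rcases ih (hp.of_isSubwalk (p.isSubwalk_cons h)) with hpath | ⟨x, c, hc, hcp⟩
    · by_cases hu : u ∈ p.support
      · have hsub : (cons h (p.takeUntil u hu)).IsSubwalk (cons h p) :=
          ⟨nil, p.dropUntil u hu, by simp [p.take_spec hu]⟩
        exact Or.inr ⟨u, _, (hpath.takeUntil hu).isCycle_cons_of_nonBacktracking h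
          (hp.of_isSubwalk hsub), hsub⟩
      · exact Or.inl (hpath.cons hu)
    · exact Or.inr ⟨x, c, hc, hcp.trans (p.isSubwalk_cons h)⟩

theorem NonBacktracking.egirth_le_length {u : V} {p : G.Walk u u} (hp : p.NonBacktracking)
    (hne : ¬ p.Nil) : G.egirth ≤ p.length := by
  rcases hp.isPath_or_exists_isCycle with hpath | ⟨x, c, hc, hcp⟩
  · exact absurd (isPath_iff_nil.mp hpath) hne
  · exact (G.egirth_le_length hc).trans (by exact_mod_cast length_le_of_isSubwalk hcp)

theorem eq_of_nonBacktracking_of_length_add_length_lt_egirth {u v : V} {p q : G.Walk u v}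
    (hp : p.NonBacktracking) (hq : q.NonBacktracking)
    (hlt : ((p.length + q.length : ℕ) : ℕ∞) < G.egirth) : p = q := by
  induction p with
  | nil =>
    by_contra hne
    have hq_nil : ¬ q.Nil := fun h => hne (eq_nil_iff_nil.mpr h).symm
    exact (hq.egirth_le_length hq_nil).not_gt (by simpa using hlt)
  | @cons u a v h p ih =>
    cases q with
    | nil => exact absurd (hp.egirth_le_length not_nil_cons) (by simpa using hlt.not_ge)
    | @cons _ b _ h' q =>
      by_cases hab : a = b
      · subst hab
        rw [ih (hp.of_isSubwalk (p.isSubwalk_cons h)) (hq.of_isSubwalk (q.isSubwalk_cons h'))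
          (lt_of_le_of_lt (by simp only [length_cons]; norm_cast; omega) hlt)]
      · -- as `a ≠ b`, the closed walk `q⁻¹ p` does not backtrack at `u`
        have hloop : ((cons h' q).reverse.append (cons h p)).NonBacktracking :=
          hq.reverse.append hp (by simpa using hab)
        refine absurd (hloop.egirth_le_length (by simp)) (not_le.mpr (lt_of_le_of_lt ?_ hlt))
        simp [add_comm]

theorem eq_of_nonBacktracking_of_prefix_darts {l : List G.Dart} {u v : V} {p q : G.Walk u v}
    (hp : p.NonBacktracking) (hq : q.NonBacktracking)
    (hlp : l <+: p.darts) (hlq : l <+: q.darts)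
    (hlt : (((p.length - l.length) + (q.length - l.length) : ℕ) : ℕ∞) < G.egirth) : p = q := by
  induction l generalizing u p q with
  | nil => exact eq_of_nonBacktracking_of_length_add_length_lt_egirth hp hq (by simpa using hlt)
  | cons d l ih =>
    cases p with
    | nil => simp at hlp
    | @cons _ a _ h p =>
      cases q with
      | nil => simp at hlq
      | @cons _ b _ h' q =>
        rw [darts_cons, cons_prefix_cons] at hlp hlq
        obtain rfl : a = b := congrArg (·.snd) (hlp.1.symm.trans hlq.1)
        rw [ih (hp.of_isSubwalk (p.isSubwalk_cons h)) (hq.of_isSubwalk (q.isSubwalk_cons h'))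
          hlp.2 hlq.2 (by simpa using hlt)]

theorem fst_eq_of_cons_prefix_darts {u v : V} {p : G.Walk u v} {d : G.Dart} {l : List G.Dart}
    (h : d :: l <+: p.darts) : d.fst = u := by
  cases p with
  | nil => simp at h
  | cons => exact (cons_prefix_cons.mp h).1 ▸ rfl

theorem IsClosedGeodesic.nonBacktracking {u : V} {w : G.Walk u u} (hw : w.IsClosedGeodesic) :
    w.NonBacktracking :=
  hw.2.1

theorem IsClosedGeodesic.nonBacktracking_append_self {u : V} {w : G.Walk u u}
    (hw : w.IsClosedGeodesic) : (w.append w).NonBacktracking :=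
  hw.nonBacktracking.append hw.nonBacktracking fun d hd d' hd' => hw.2.2 d' hd' d hd

theorem IsClosedGeodesic.exists_rotation_prefix_darts {u : V} {w : G.Walk u u}
    (hw : w.IsClosedGeodesic) {l : List G.Dart} (hl : l <:+: w.darts ++ w.darts)
    (hlen : l.length ≤ w.length) :
    ∃ (x : V) (r : G.Walk x x), r.NonBacktracking ∧ r.darts ~r w.darts ∧ l <+: r.darts := by
  obtain ⟨s, t, hst, hlts⟩ :=
    exists_eq_append_and_prefix_append_swap_of_infix_append_self hl (by rwa [length_darts])
  have hr : ((w.drop s.length).append (w.take s.length)).darts = t ++ s := by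
    simp [darts_drop, darts_take, hst]
  refine ⟨_, _, hw.nonBacktracking_append_self.of_darts_infix ?_, ?_, hr ▸ hlts⟩
  · rw [hr, darts_append, hst]
    exact ⟨s, t, by simp⟩
  · rw [hr, hst]
    exact isRotated_append

end SimpleGraph.Walk

theorem SimpleGraph.egirth_eq_of_girth_eq {V : Type*} {G : SimpleGraph V} {g : ℕ}
    (hg : G.girth = g) (hg₀ : g ≠ 0) : G.egirth = g := by
  have hcyclic : ¬ G.IsAcyclic := girth_eq_zero.not.mp (hg ▸ hg₀)
  rw [← hg, girth, ENat.natCast_toNat (egirth_eq_top.not.mpr hcyclic)]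

/-- If two closed geodesics of length `g` in a graph of girth `g` share a common
(cyclic) subwalk of length `⌊g/2⌋ + 1`, then they coincide up to cyclic
permutation of their edge sequences. -/
theorem closed_geodesics_sharing_long_subwalk_coincide
    {V : Type*} (G : SimpleGraph V) (g : ℕ) (hg : G.girth = g)
    {u v : V} (w₁ : G.Walk u u) (w₂ : G.Walk v v)
    (h₁ : w₁.IsClosedGeodesic) (h₂ : w₂.IsClosedGeodesic)
    (hl₁ : w₁.length = g) (hl₂ : w₂.length = g)
    (l : List G.Dart) (hlen : l.length = g / 2 + 1)
    (hinf₁ : l <:+: w₁.darts ++ w₁.darts) (hinf₂ : l <:+: w₂.darts ++ w₂.darts) :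
    w₁.darts ~r w₂.darts := by
  have hg₀ : g ≠ 0 := by
    rw [← hl₁, ← Walk.length_darts]
    exact (length_pos_iff.mpr h₁.1).ne'
  obtain ⟨x₁, r₁, hr₁, hrot₁, hpre₁⟩ := h₁.exists_rotation_prefix_darts hinf₁ (by omega)
  obtain ⟨x₂, r₂, hr₂, hrot₂, hpre₂⟩ := h₂.exists_rotation_prefix_darts hinf₂ (by omega)
  obtain ⟨d, l, rfl⟩ := exists_cons_of_length_eq_add_one hlen
  obtain rfl : x₁ = x₂ := by
    rw [← Walk.fst_eq_of_cons_prefix_darts hpre₁, Walk.fst_eq_of_cons_prefix_darts hpre₂]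
  have hlen_r₁ : r₁.length = g := by simpa [hl₁] using hrot₁.perm.length_eq
  have hlen_r₂ : r₂.length = g := by simpa [hl₂] using hrot₂.perm.length_eq
  obtain rfl : r₁ = r₂ := Walk.eq_of_nonBacktracking_of_prefix_darts hr₁ hr₂ hpre₁ hpre₂
    (by rw [egirth_eq_of_girth_eq hg hg₀, hlen_r₁, hlen_r₂, hlen]; norm_cast; omega)
  exact hrot₁.symm.trans hrot₂
end

section
/- If G is a connected graph of maximal degree d and girth g on n vertices, then the number of distinct shortest oriented cycles of G is at most n·d·(d-1)^⌊g/2⌋ / g. -/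
/-
A shortest cycle through `v` is determined by its first `⌊g/2⌋ + 1` steps: if two of them agreed
that far, their remaining arcs would be two distinct paths of total length `< g` between the same
endpoints, and these contain a cycle shorter than the girth. So rooted shortest cycles inject into
paths with `⌊g/2⌋ + 1` edges, of which there are at most `n d (d-1)^⌊g/2⌋`; each unrooted oriented
cycle has `g` roots.
-/

open SimpleGraph

/-- The number of shortest oriented cycles equipped with a starting point:
pairs `(v, w)` where `w` is an (oriented) cycle of length `g` based at `v`. -/
noncomputable def rootedShortestCycles {V : Type*} (G : SimpleGraph V) (g : ℕ) : ℕ :=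
  {p : (v : V) × G.Walk v v | p.2.IsCycle ∧ p.2.length = g}.ncard

/-- The kissing number: the number of shortest oriented cycles, counted up to
cyclic permutation of their edges (each such cycle of length `g` has exactly `g`
rooted representatives). -/
noncomputable def kissingNumber {V : Type*} (G : SimpleGraph V) (g : ℕ) : ℕ :=
  rootedShortestCycles G g / g

open Finset

namespace SimpleGraph

variable {V : Type*} {G : SimpleGraph V}

theorem Walk.IsCycle.eq_of_getVert_eq {v : V} {w₁ w₂ : G.Walk v v} (h₁ : w₁.IsCycle)
    (h₂ : w₂.IsCycle) {k : ℕ} (hk : w₁.length - k + (w₂.length - k) < G.girth)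
    (h : ∀ i ≤ k, w₁.getVert i = w₂.getVert i) : w₁ = w₂ := by
  have hk₀ : 0 < k := by
    have := G.girth_le_length h₁
    omega
  have hx : w₂.getVert k = w₁.getVert k := (h k le_rfl).symm
  have hp₁ : (w₁.drop k).IsPath := h₁.isPath_drop hk₀
  have hp₂ : ((w₂.drop k).copy hx rfl).IsPath := by
    simpa using h₂.isPath_drop hk₀
  by_cases hd : w₁.drop k = (w₂.drop k).copy hx rfl
  · refine Walk.ext_getVert fun i => ?_
    rcases le_or_gt i k with hi | hi
    · exact h i hi
    · obtain ⟨j, rfl⟩ := Nat.exists_eq_add_of_le hi.le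
      simpa [Walk.drop_getVert] using congrArg (·.getVert j) hd
  · obtain ⟨_, -, -, c, hc, hlen⟩ := hp₁.exists_isCycle_length_le_add_of_ne hp₂ hd
    have := G.girth_le_length hc
    simp only [Walk.drop_length, Walk.length_copy] at hlen
    omega

section PathTuples

variable [Fintype V] [DecidableEq V] [DecidableRel G.Adj]

variable (G) in
def pathTuples (m : ℕ) : Finset (Fin (m + 1) → V) :=
  {f | (∀ i : Fin m, G.Adj (f i.castSucc) (f i.succ)) ∧ f.Injective}

@[simp]
theorem mem_pathTuples {m : ℕ} {f : Fin (m + 1) → V} :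
    f ∈ G.pathTuples m ↔ (∀ i : Fin m, G.Adj (f i.castSucc) (f i.succ)) ∧ f.Injective := by
  simp [pathTuples]

theorem pathTuples_succ_subset (m : ℕ) :
    G.pathTuples (m + 1) ⊆ (G.pathTuples m).biUnion fun t =>
      (G.neighborFinset (t 0) \ univ.image t).image (Fin.cons · t) := by
  intro f hf
  obtain ⟨hadj, hinj⟩ := mem_pathTuples.1 hf
  refine mem_biUnion.2 ⟨Fin.tail f, mem_pathTuples.2 ⟨fun i => ?_, ?_⟩,
    mem_image.2 ⟨f 0, ?_, Fin.cons_self_tail f⟩⟩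
  · simpa only [Fin.tail, Fin.succ_castSucc] using hadj i.succ
  · exact hinj.comp (Fin.succ_injective _)
  · simp only [mem_sdiff, mem_neighborFinset, mem_image, mem_univ, true_and, not_exists]
    exact ⟨by simpa [Fin.tail] using (hadj 0).symm, fun j hj => Fin.succ_ne_zero j (hinj hj)⟩

theorem card_pathTuples_succ_le {m b : ℕ}
    (hb : ∀ t ∈ G.pathTuples m, #(G.neighborFinset (t 0) \ univ.image t) ≤ b) :
    #(G.pathTuples (m + 1)) ≤ #(G.pathTuples m) * b :=
  (card_le_card (pathTuples_succ_subset m)).trans <|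
    card_biUnion_le_card_mul _ _ _ fun t ht => card_image_le.trans (hb t ht)

theorem card_pathTuples_one_le : #(G.pathTuples 1) ≤ Fintype.card V * G.maxDegree := by
  refine (card_pathTuples_succ_le fun t _ => ?_).trans (Nat.mul_le_mul_right _ ?_)
  · calc #(G.neighborFinset (t 0) \ univ.image t)
        ≤ #(G.neighborFinset (t 0)) := card_le_card sdiff_subset
      _ ≤ G.maxDegree := by
        rw [card_neighborFinset_eq_degree]
        exact G.degree_le_maxDegree _
  · simpa using card_le_univ (G.pathTuples 0)

theorem card_pathTuples_succ_succ_le (m : ℕ) :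
    #(G.pathTuples (m + 2)) ≤ #(G.pathTuples (m + 1)) * (G.maxDegree - 1) := by
  refine card_pathTuples_succ_le fun t ht => ?_
  have h₁ : t 1 ∈ G.neighborFinset (t 0) := by
    simpa using (mem_pathTuples.1 ht).1 0
  calc #(G.neighborFinset (t 0) \ univ.image t)
      ≤ #((G.neighborFinset (t 0)).erase (t 1)) := by
        refine card_le_card fun x hx => ?_
        simp only [mem_sdiff, mem_image, mem_univ, true_and, not_exists] at hx
        exact mem_erase.2 ⟨fun h => hx.2 1 h.symm, hx.1⟩
    _ ≤ G.maxDegree - 1 := by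
        rw [card_erase_of_mem h₁, card_neighborFinset_eq_degree]
        exact Nat.sub_le_sub_right (G.degree_le_maxDegree _) 1

theorem card_pathTuples_le (m : ℕ) :
    #(G.pathTuples (m + 1)) ≤ Fintype.card V * G.maxDegree * (G.maxDegree - 1) ^ m := by
  induction m with
  | zero => simpa using card_pathTuples_one_le
  | succ m ih =>
    calc #(G.pathTuples (m + 2))
        ≤ #(G.pathTuples (m + 1)) * (G.maxDegree - 1) := card_pathTuples_succ_succ_le m
      _ ≤ Fintype.card V * G.maxDegree * (G.maxDegree - 1) ^ m * (G.maxDegree - 1) :=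
        Nat.mul_le_mul_right _ ih
      _ = Fintype.card V * G.maxDegree * (G.maxDegree - 1) ^ (m + 1) := by ring

theorem Walk.IsCycle.getVert_mem_pathTuples {v : V} {w : G.Walk v v} (hc : w.IsCycle) {k : ℕ}
    (hk : k < w.length) : (fun i : Fin (k + 1) => w.getVert i) ∈ G.pathTuples k := by
  have hpath : (w.take k).IsPath := hc.isPath_take hk
  have hmem (i : Fin (k + 1)) : (i : ℕ) ∈ {j | j ≤ (w.take k).length} := by
    simp only [Set.mem_ofPred_eq, Walk.take_length]
    omega
  refine mem_pathTuples.2 ⟨fun i => w.adj_getVert_succ (by simp only [Fin.val_castSucc]; omega),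
    fun i j hij => Fin.ext <| hpath.getVert_injOn (hmem i) (hmem j) ?_⟩
  simpa [Walk.take_getVert, Nat.min_eq_right, Fin.is_le] using hij

theorem rootedShortestCycles_girth_le :
    rootedShortestCycles G G.girth ≤ #(G.pathTuples (G.girth / 2 + 1)) := by
  rw [rootedShortestCycles, ← Set.ncard_coe_finset]
  refine Set.ncard_le_ncard_of_injOn (fun p i => p.2.getVert i) ?_ ?_ (Set.toFinite _)
  · rintro ⟨v, w⟩ ⟨hc, hl⟩
    dsimp only at hc hl
    have := hc.three_le_length
    exact hc.getVert_mem_pathTuples (by omega)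
  · rintro ⟨v₁, w₁⟩ ⟨hc₁, hl₁⟩ ⟨v₂, w₂⟩ ⟨hc₂, hl₂⟩ heq
    dsimp only at hc₁ hl₁ hc₂ hl₂
    have := hc₁.three_le_length
    obtain rfl : v₁ = v₂ := by simpa using congrFun heq 0
    refine congrArg (Sigma.mk v₁) (hc₁.eq_of_getVert_eq hc₂ (k := G.girth / 2 + 1) (by omega)
      fun i hi => ?_)
    simpa using congrFun heq ⟨i, by omega⟩

end PathTuples

end SimpleGraph

theorem Nat.cast_mul_sub_one_pow {R : Type*} [Ring R] (d j : ℕ) :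
    ((d * (d - 1) ^ j : ℕ) : R) = d * ((d : R) - 1) ^ j := by
  cases d <;> simp

theorem kissing_number_le_general {V : Type*} [Fintype V] (G : SimpleGraph V)
    [DecidableRel G.Adj] (n d g : ℕ)
    (hd : G.maxDegree = d) (hg : G.girth = g) (hn : Fintype.card V = n) :
    (kissingNumber G g : ℝ) ≤ n * d * ((d : ℝ) - 1) ^ (g / 2) / g := by
  classical
  subst hd hg hn
  have hrooted := (rootedShortestCycles_girth_le (G := G)).trans (card_pathTuples_le _)
  calc (kissingNumber G G.girth : ℝ)
      ≤ rootedShortestCycles G G.girth / G.girth := Nat.cast_div_le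
    _ ≤ (Fintype.card V * (G.maxDegree * (G.maxDegree - 1) ^ (G.girth / 2)) : ℕ) / G.girth := by
      rw [← mul_assoc]
      gcongr
    _ = Fintype.card V * G.maxDegree * ((G.maxDegree : ℝ) - 1) ^ (G.girth / 2) / G.girth := by
      rw [Nat.cast_mul, Nat.cast_mul_sub_one_pow, mul_assoc]

/-- If `G` is a connected graph of maximal degree `d` and girth `g` on `n`
vertices, then `kiss(G) ≤ n d (d-1)^⌊g/2⌋ / g`. -/
theorem kissing_number_le {V : Type*} [Fintype V] (G : SimpleGraph V)
    [DecidableRel G.Adj] (n d g : ℕ) (hconn : G.Connected)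
    (hd : G.maxDegree = d) (hg : G.girth = g) (hn : Fintype.card V = n) :
    (kissingNumber G g : ℝ) ≤ n * d * ((d : ℝ) - 1) ^ (g / 2) / g :=
  kissing_number_le_general G n d g hd hg hn
end

section
/- Let d ≥ 3. If G is a connected d-regular graph of odd girth g ≥ 3 on n vertices, then kiss(G) ≤ n(n(d-2)+2) / (2·log_{d-1}((n(d-2)+2)/d) + 1). -/
/-! Write `g = 2k + 1`. Two distinct paths with the same ends contain a cycle no longer than their
total length, so paths whose lengths add up to less than `g` are unique. Hence a shortest cycle is
determined by its last `k + 1` steps (its first `k` steps form the unique short path joining their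
ends), which form a path of length `k + 1`; in a `d`-regular graph there are at most `n d (d-1)^k`
such paths, so `kiss(G) ≤ n d (d-1)^k / (2k+1)`. Likewise the paths of length at most `k` ending at
a fixed vertex have distinct starting points, and there are `d (d-1)^(m-1)` of length `m ≥ 1`; this
is the Moore bound `d (d-1)^k ≤ n(d-2) + 2`, i.e. `k ≤ R := log_{d-1}((n(d-2)+2)/d)`. Finally
`x ↦ (d-1)^x / (2x+1)` is increasing on `[1, ∞)`, and its value at `R` is `(n(d-2)+2) / (d(2R+1))`.
-/

open SimpleGraph

open Finset

theorem rpow_div_two_mul_add_one_le {b x y : ℝ} (hb : 2 ≤ b) (hx : 1 ≤ x) (hxy : x ≤ y) :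
    b ^ x / (2 * x + 1) ≤ b ^ y / (2 * y + 1) := by
  -- `2 / 3 < log 2`, and `2 / 3 * (2 * x + 1) ≥ 2` as soon as `x ≥ 1`.
  have hgrowth : 1 + 2 / 3 * (y - x) ≤ b ^ (y - x) :=
    calc 1 + 2 / 3 * (y - x) ≤ Real.log 2 * (y - x) + 1 := by
          nlinarith [Real.log_two_gt_d9]
      _ ≤ Real.exp (Real.log 2 * (y - x)) := Real.add_one_le_exp _
      _ = 2 ^ (y - x) := by rw [Real.rpow_def_of_pos two_pos]
      _ ≤ b ^ (y - x) := Real.rpow_le_rpow zero_le_two hb (by linarith)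
  have hsplit : b ^ y = b ^ x * b ^ (y - x) := by
    rw [← Real.rpow_add (by linarith), add_sub_cancel]
  have hbx : 0 < b ^ x := Real.rpow_pos_of_pos (by linarith) x
  have hlin : 2 * y + 1 ≤ b ^ (y - x) * (2 * x + 1) := by
    nlinarith [mul_nonneg (sub_nonneg.2 hx) (sub_nonneg.2 hxy)]
  rw [div_le_div_iff₀ (by linarith) (by linarith), hsplit, mul_assoc]
  gcongr

theorem mul_pow_div_le_div_logb {d M : ℝ} {k : ℕ} (hd : 3 ≤ d) (hk : 1 ≤ k)
    (hM : d * (d - 1) ^ k ≤ M) :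
    d * (d - 1) ^ k / (2 * k + 1) ≤ M / (2 * Real.logb (d - 1) (M / d) + 1) := by
  have hpow : (d - 1) ^ k ≤ M / d := by rw [le_div_iff₀ (by linarith)]; linarith
  have hMd : 0 < M / d := lt_of_lt_of_le (pow_pos (by linarith) k) hpow
  have hk_le : (k : ℝ) ≤ Real.logb (d - 1) (M / d) := by
    rwa [Real.le_logb_iff_rpow_le (by linarith) hMd, Real.rpow_natCast]
  calc d * (d - 1) ^ k / (2 * k + 1) = d * ((d - 1) ^ (k : ℝ) / (2 * k + 1)) := by
        rw [Real.rpow_natCast, mul_div_assoc]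
    _ ≤ d * ((d - 1) ^ Real.logb (d - 1) (M / d) / (2 * Real.logb (d - 1) (M / d) + 1)) := by
        refine mul_le_mul_of_nonneg_left ?_ (by linarith)
        exact rpow_div_two_mul_add_one_le (by linarith) (by exact_mod_cast hk) hk_le
    _ = M / (2 * Real.logb (d - 1) (M / d) + 1) := by
        rw [Real.rpow_logb (by linarith) (by linarith : d - 1 ≠ 1) hMd]
        field_simp

namespace SimpleGraph

open Walk

variable {V : Type*} {G : SimpleGraph V} {u v w : V}

theorem egirth_eq_girth (h : ¬G.IsAcyclic) : G.egirth = G.girth := by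
  rw [girth, ENat.natCast_toNat (egirth_eq_top.not.mpr h)]

theorem Walk.IsPath.eq_of_length_add_lt_egirth {p q : G.Walk u v} (hp : p.IsPath)
    (hq : q.IsPath) (h : ((p.length + q.length : ℕ) : ℕ∞) < G.egirth) : p = q := by
  by_contra hne
  obtain ⟨_, -, -, c, hc, hlen⟩ := hp.exists_isCycle_length_le_add_of_ne hq hne
  exact (egirth_le_length hc).not_gt (lt_of_le_of_lt (by exact_mod_cast hlen) h)

theorem Walk.IsPath.append_eq_of_length_add_lt_egirth {x₁ x₂ : V} {p₁ : G.Walk u x₁}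
    {p₂ : G.Walk u x₂} {q₁ : G.Walk x₁ v} {q₂ : G.Walk x₂ v} (hp₁ : p₁.IsPath) (hp₂ : p₂.IsPath)
    (h : ((p₁.length + p₂.length : ℕ) : ℕ∞) < G.egirth)
    (hq : (⟨x₁, q₁⟩ : (x : V) × G.Walk x v) = ⟨x₂, q₂⟩) : p₁.append q₁ = p₂.append q₂ := by
  cases hq
  rw [hp₁.eq_of_length_add_lt_egirth hp₂ h]

theorem Walk.sigma_snd_tail_cons (h : G.Adj u w) (p : G.Walk w v) :
    (⟨(cons h p).snd, (cons h p).tail⟩ : (x : V) × G.Walk x v) = ⟨w, p⟩ := by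
  cases p <;> rfl

variable (G) [Fintype V] [DecidableEq V] [DecidableRel G.Adj]

/-- Paths are indexed by their last vertex so that they grow by `Walk.cons`. -/
def pathsTo (v : V) (m : ℕ) : Finset ((u : V) × G.Walk u v) :=
  univ.sigma fun u ↦ {p ∈ G.finsetWalkLength m u v | p.IsPath}

variable {G}

@[simp]
theorem mem_pathsTo {m : ℕ} {p : (u : V) × G.Walk u v} :
    p ∈ G.pathsTo v m ↔ p.2.IsPath ∧ p.2.length = m := by
  simp [pathsTo, mem_finsetWalkLength_iff, and_comm]

theorem card_pathsTo_succ (v : V) (m : ℕ) :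
    #(G.pathsTo v (m + 1)) =
      ∑ q ∈ G.pathsTo v m, #{u ∈ G.neighborFinset q.1 | u ∉ q.2.support} := by
  rw [card_eq_sum_card_fiberwise (f := fun p : (u : V) × G.Walk u v ↦
    (⟨p.2.snd, p.2.tail⟩ : (u : V) × G.Walk u v))]
  · refine sum_congr rfl fun ⟨x, q⟩ hq ↦ card_nbij Sigma.fst ?_ ?_ ?_
    · rintro ⟨u, _ | ⟨h, p⟩⟩ hp <;>
        simp only [coe_filter, Set.mem_ofPred_eq, mem_pathsTo, length_nil, sigma_snd_tail_cons] at hp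
      · omega
      obtain ⟨⟨hpath, -⟩, hpq⟩ := hp
      cases hpq
      rw [cons_isPath_iff] at hpath
      simpa [h.symm] using hpath.2
    · rintro ⟨u, _ | ⟨h, p⟩⟩ hp ⟨u', _ | ⟨h', p'⟩⟩ hp' hu <;>
        simp only [coe_filter, Set.mem_ofPred_eq, mem_pathsTo, length_nil, sigma_snd_tail_cons]
          at hp hp'
      all_goals try omega
      obtain rfl : u = u' := hu
      cases hp.2
      cases hp'.2
      rfl
    · intro u hu
      simp only [coe_filter, mem_neighborFinset, Set.mem_ofPred_eq] at hu
      obtain ⟨hpath : q.IsPath, hlen : q.length = m⟩ := mem_pathsTo.1 hq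
      refine ⟨⟨u, cons hu.1.symm q⟩, ?_, rfl⟩
      rw [coe_filter, Set.mem_ofPred_eq, sigma_snd_tail_cons, mem_pathsTo]
      simp [cons_isPath_iff, hpath, hlen, hu.2]
  · rintro ⟨u, p⟩ hp
    simp only [mem_coe, mem_pathsTo] at hp ⊢
    exact ⟨hp.1.tail, by simp [length_tail, hp.2]⟩

theorem pathsTo_zero (v : V) : G.pathsTo v 0 = {⟨v, nil⟩} := by
  ext ⟨u, p⟩
  cases p with
  | nil => simp
  | cons h p =>
    refine iff_of_false (by simp) ?_
    simp only [mem_singleton, Sigma.mk.injEq]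
    rintro ⟨rfl, hh⟩
    cases hh

theorem card_pathsTo_one (v : V) : #(G.pathsTo v 1) = G.degree v := by
  rw [card_pathsTo_succ, pathsTo_zero, sum_singleton, ← card_neighborFinset_eq_degree]
  congr 1
  exact filter_true_of_mem fun u hu ↦ by simpa using (G.mem_neighborFinset v u).1 hu |>.ne'

theorem filter_notMem_support_subset_erase_snd {x : V} (q : G.Walk x v) :
    {u ∈ G.neighborFinset x | u ∉ q.support} ⊆ (G.neighborFinset x).erase q.snd := fun u hu ↦ by
  rw [mem_filter] at hu
  exact mem_erase.2 ⟨fun h ↦ hu.2 (h ▸ q.getVert_mem_support 1), hu.1⟩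

theorem erase_snd_subset_filter_notMem_support {x : V} {q : G.Walk x v} (hq : q.IsPath)
    (h : ((q.length + 1 : ℕ) : ℕ∞) < G.egirth) :
    (G.neighborFinset x).erase q.snd ⊆ {u ∈ G.neighborFinset x | u ∉ q.support} := by
  intro u hu
  obtain ⟨hsnd, hadj⟩ := mem_erase.1 hu
  refine mem_filter.2 ⟨hadj, fun hmem ↦ hsnd ?_⟩
  obtain ⟨i, rfl, hi⟩ := mem_support_iff_exists_getVert.1 hmem
  have hadj := (G.mem_neighborFinset _ _).1 hadj
  have := congrArg length <| (hq.take i).eq_of_length_add_lt_egirth hadj.isPath_toWalk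
    (lt_of_le_of_lt (by simp) h)
  simp only [take_length, hadj.length_toWalk] at this
  rw [show i = 1 by omega]

theorem card_neighborFinset_erase_snd {x : V} {q : G.Walk x v} (hq : ¬q.Nil) :
    #((G.neighborFinset x).erase q.snd) = G.degree x - 1 := by
  rw [card_erase_of_mem ((G.mem_neighborFinset _ _).2 (adj_snd hq)), card_neighborFinset_eq_degree]

variable {d : ℕ}

theorem card_pathsTo_succ_le (hdeg : ∀ x, G.degree x ≤ d) (v : V) (m : ℕ) :
    #(G.pathsTo v (m + 1)) ≤ d * (d - 1) ^ m := by
  induction m with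
  | zero => simpa [card_pathsTo_one] using hdeg v
  | succ m ih =>
    rw [card_pathsTo_succ]
    calc _ ≤ #(G.pathsTo v (m + 1)) * (d - 1) := by
          refine (sum_le_card_nsmul _ _ _ fun ⟨x, q⟩ hq ↦ ?_).trans_eq (smul_eq_mul ..)
          obtain ⟨-, hlen : q.length = m + 1⟩ := mem_pathsTo.1 hq
          have hq : ¬q.Nil := not_nil_iff_lt_length.2 (by omega)
          grw [filter_notMem_support_subset_erase_snd q, card_neighborFinset_erase_snd hq, hdeg x]
      _ ≤ d * (d - 1) ^ (m + 1) := by rw [pow_succ, ← mul_assoc]; gcongr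

theorem le_card_pathsTo_succ (hreg : G.IsRegularOfDegree d) (v : V) {m : ℕ}
    (hm : ((m + 1 : ℕ) : ℕ∞) < G.egirth) : d * (d - 1) ^ m ≤ #(G.pathsTo v (m + 1)) := by
  induction m with
  | zero => simp [card_pathsTo_one, hreg v]
  | succ m ih =>
    rw [card_pathsTo_succ]
    calc d * (d - 1) ^ (m + 1) ≤ #(G.pathsTo v (m + 1)) * (d - 1) := by
          rw [pow_succ, ← mul_assoc]
          gcongr
          exact ih (lt_of_le_of_lt (by norm_cast; omega) hm)
      _ ≤ _ := by
          refine (smul_eq_mul ..).symm.trans_le (card_nsmul_le_sum _ _ _ fun ⟨x, q⟩ hq ↦ ?_)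
          obtain ⟨hpath : q.IsPath, hlen : q.length = m + 1⟩ := mem_pathsTo.1 hq
          have hq : ¬q.Nil := not_nil_iff_lt_length.2 (by omega)
          grw [← erase_snd_subset_filter_notMem_support hpath (by rwa [hlen]),
            card_neighborFinset_erase_snd hq, hreg x]

theorem sum_card_pathsTo_le_card (v : V) {k : ℕ} (hk : ((2 * k : ℕ) : ℕ∞) < G.egirth) :
    ∑ m ∈ range (k + 1), #(G.pathsTo v m) ≤ Fintype.card V := by
  rw [← card_biUnion]
  · refine (card_le_card_of_injOn Sigma.fst (fun _ _ ↦ mem_coe.2 (mem_univ _)) ?_).trans_eq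
      card_univ
    rintro ⟨u, p⟩ hp ⟨u', p'⟩ hp' (rfl : u = u')
    simp only [coe_biUnion, mem_coe, mem_range, mem_pathsTo, Set.mem_iUnion] at hp hp'
    obtain ⟨i, hi, hp, rfl⟩ := hp
    obtain ⟨j, hj, hp', rfl⟩ := hp'
    rw [hp.eq_of_length_add_lt_egirth hp' (lt_of_le_of_lt (by norm_cast; omega) hk)]
  · intro i _ j _ hij
    exact Finset.disjoint_left.2 fun p hi hj ↦
      hij ((mem_pathsTo.1 hi).2.symm.trans (mem_pathsTo.1 hj).2)

theorem IsRegularOfDegree.moore_bound (hreg : G.IsRegularOfDegree d) (v : V) {k : ℕ}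
    (hk : ((2 * k : ℕ) : ℕ∞) < G.egirth) : d * (d - 1) ^ k ≤ Fintype.card V * (d - 2) + 2 := by
  have hcard := sum_card_pathsTo_le_card v hk
  rw [sum_range_succ', pathsTo_zero, card_singleton] at hcard
  have hpaths : ∑ m ∈ range k, d * (d - 1) ^ m ≤ ∑ m ∈ range k, #(G.pathsTo v (m + 1)) :=
    sum_le_sum fun m hm ↦ le_card_pathsTo_succ hreg v <|
      lt_of_le_of_lt (by norm_cast; rw [mem_range] at hm; omega) hk
  rw [← mul_sum] at hpaths
  rcases lt_or_ge d 2 with hd | hd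
  · interval_cases d
    · simp
    · simpa using (pow_le_one₀ le_rfl zero_le_one).trans one_le_two
  · obtain ⟨e, rfl⟩ := Nat.exists_eq_add_of_le' hd
    have hgeom := geom_sum_mul_add e k
    simp only [show e + 2 - 1 = e + 1 by omega, Nat.add_sub_cancel] at hpaths ⊢
    nlinarith

theorem rootedShortestCycles_le_sum_card_pathsTo (k : ℕ)
    (hk : ((2 * k + 1 : ℕ) : ℕ∞) ≤ G.egirth) :
    rootedShortestCycles G (2 * k + 1) ≤ ∑ v, #(G.pathsTo v (k + 1)) := by
  rw [rootedShortestCycles, ← card_sigma, ← Set.ncard_coe_finset]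
  refine Set.ncard_le_ncard_of_injOn (fun p ↦ ⟨p.1, p.2.getVert k, p.2.drop k⟩) ?_ ?_
    (Set.toFinite _)
  · rintro ⟨v, c⟩ ⟨hc : c.IsCycle, hlen : c.length = 2 * k + 1⟩
    have : 1 ≤ k := by have := hc.three_le_length; omega
    simp only [mem_coe, mem_sigma, mem_univ, true_and, mem_pathsTo, drop_length, hlen]
    exact ⟨hc.isPath_drop (by omega), by omega⟩
  · rintro ⟨v, c⟩ ⟨hc : c.IsCycle, hlen : c.length = 2 * k + 1⟩
      ⟨v', c'⟩ ⟨hc' : c'.IsCycle, hlen' : c'.length = 2 * k + 1⟩ h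
    obtain ⟨rfl, h⟩ := Sigma.mk.inj_iff.1 h
    suffices c = c' by rw [this]
    rw [← c.append_take_drop_eq k, ← c'.append_take_drop_eq k]
    refine (hc.isPath_take (by omega)).append_eq_of_length_add_lt_egirth
      (hc'.isPath_take (by omega)) (lt_of_lt_of_le ?_ hk) (eq_of_heq h)
    simp only [take_length, hlen, hlen']
    norm_cast
    omega

end SimpleGraph

theorem kissing_number_le_odd_girth_general {V : Type*} [Fintype V] (G : SimpleGraph V)
    [DecidableRel G.Adj] (n d g : ℕ) (hd : 3 ≤ d) (hreg : G.IsRegularOfDegree d)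
    (hg : G.girth = g) (hodd : Odd g) (hn : Fintype.card V = n) :
    (kissingNumber G g : ℝ) ≤
      n * ((n : ℝ) * ((d : ℝ) - 2) + 2) /
        (2 * Real.logb ((d : ℝ) - 1) (((n : ℝ) * ((d : ℝ) - 2) + 2) / d) + 1) := by
  classical
  obtain ⟨k, rfl⟩ := hodd
  have hcyclic : ¬G.IsAcyclic := fun h ↦ by simp [h.girth_eq_zero] at hg
  have hk : 1 ≤ k := by have := three_le_girth hcyclic; omega
  have hegirth : G.egirth = (2 * k + 1 : ℕ) := hg ▸ egirth_eq_girth hcyclic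
  obtain ⟨v, -⟩ := exists_egirth_eq_length.mpr hcyclic
  subst hn
  have hcycles : rootedShortestCycles G (2 * k + 1) ≤ Fintype.card V * (d * (d - 1) ^ k) :=
    (rootedShortestCycles_le_sum_card_pathsTo k hegirth.ge).trans <|
      (sum_le_card_nsmul _ _ _ fun v _ ↦ card_pathsTo_succ_le (fun x ↦ (hreg x).le) v k).trans_eq
        (by rw [card_univ, smul_eq_mul])
  have hmoore := hreg.moore_bound v (k := k) (by rw [hegirth]; norm_cast; omega)
  have hd₁ : ((d - 1 : ℕ) : ℝ) = d - 1 := by norm_num [Nat.cast_sub (by omega : 1 ≤ d)]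
  have hd₂ : ((d - 2 : ℕ) : ℝ) = d - 2 := by norm_num [Nat.cast_sub (by omega : 2 ≤ d)]
  calc (kissingNumber G (2 * k + 1) : ℝ)
      ≤ rootedShortestCycles G (2 * k + 1) / ((2 * k + 1 : ℕ) : ℝ) := Nat.cast_div_le
    _ ≤ Fintype.card V * (d * ((d : ℝ) - 1) ^ k / (2 * k + 1)) := by
        rw [← mul_div_assoc]
        push_cast
        gcongr
        simpa [hd₁] using (Nat.cast_le (α := ℝ)).2 hcycles
    _ ≤ _ := by
        rw [mul_div_assoc (Fintype.card V : ℝ)]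
        refine mul_le_mul_of_nonneg_left ?_ (Nat.cast_nonneg _)
        refine mul_pow_div_le_div_logb (by exact_mod_cast hd) hk ?_
        simpa [hd₁, hd₂] using (Nat.cast_le (α := ℝ)).2 hmoore

/-- If `G` is a connected `d`-regular graph (`d ≥ 3`) of odd girth `g ≥ 3` on
`n` vertices, then
`kiss(G) ≤ n(n(d-2)+2) / (2·log_{d-1}((n(d-2)+2)/d) + 1)`. -/
theorem kissing_number_le_odd_girth {V : Type*} [Fintype V] (G : SimpleGraph V)
    [DecidableRel G.Adj] (n d g : ℕ) (hd : 3 ≤ d) (hreg : G.IsRegularOfDegree d) (hconn : G.Connected)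
    (hg : G.girth = g) (hodd : Odd g) (hg3 : 3 ≤ g) (hn : Fintype.card V = n) :
    (kissingNumber G g : ℝ) ≤
      n * ((n : ℝ) * ((d : ℝ) - 2) + 2) /
        (2 * Real.logb ((d : ℝ) - 1) (((n : ℝ) * ((d : ℝ) - 2) + 2) / d) + 1) :=
  kissing_number_le_odd_girth_general G n d g hd hreg hg hodd hn
end

section
/- Let p ≡ 1 (mod 4) be prime and let k be even with q a natural number satisfying q ≡ 1 (mod 4), q² ≢ p (mod 16), and p^k < q < 2p^k. Then 16 does not divide p^⌈log_p(q²)⌉ − q² and 16 does not divide 2·p^⌈log_p(2q²)⌉ − 4q². -/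
/-!
Since `p ≥ 5`, the window `p^k < q < 2p^k` gives `p^(2k) < q² < 4p^(2k) ≤ p^(2k+1)`, so the first
exponent is `2k + 1 ≡ 1 (mod 4)`. An odd `p` has `p⁴ ≡ 1 (mod 16)`, hence `p^(2k+1) ≡ p`, and
`16 ∣ p^(2k+1) - q²` would force `q² ≡ p (mod 16)`. The second quantity is twice an odd number minus
a multiple of `4`, so it is not even divisible by `4`.
-/

lemma Real.ceil_logb_natCast_toNat (b n : ℕ) : ⌈Real.logb b (n : ℝ)⌉.toNat = Nat.clog b n := by
  rw [Real.ceil_logb_natCast n.cast_nonneg, Int.clog_natCast, Int.toNat_natCast]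

lemma Nat.clog_sq_eq_of_lt_of_lt_two_mul {p k q : ℕ} (hp : 4 ≤ p) (h1 : p ^ k < q)
    (h2 : q < 2 * p ^ k) : Nat.clog p (q ^ 2) = 2 * k + 1 := by
  have hp1 : 1 < p := by omega
  have hlow : p ^ (2 * k) < q ^ 2 := by
    rw [pow_mul']
    exact Nat.pow_lt_pow_left h1 two_ne_zero
  have hhigh : q ^ 2 ≤ p ^ (2 * k + 1) :=
    calc q ^ 2 ≤ (2 * p ^ k) ^ 2 := Nat.pow_le_pow_left h2.le 2
      _ = 4 * p ^ (2 * k) := by ring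
      _ ≤ p * p ^ (2 * k) := Nat.mul_le_mul_right _ hp
      _ = p ^ (2 * k + 1) := by ring
  have hle := (Nat.clog_le_iff_le_pow hp1).2 hhigh
  have hlt := (Nat.lt_clog_iff_pow_lt hp1).2 hlow
  omega

lemma Int.sixteen_dvd_pow_four_sub_one {a : ℤ} (ha : Odd a) : 16 ∣ a ^ 4 - 1 := by
  have h2 : 2 ∣ a ^ 2 + 1 := (ha.pow.add_one).two_dvd
  have : a ^ 4 - 1 = (a ^ 2 - 1) * (a ^ 2 + 1) := by ring
  rw [this]
  exact mul_dvd_mul (Int.eight_dvd_sq_sub_one_of_odd ha) h2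

lemma Int.pow_four_mul_add_one_modEq_self {a : ℤ} (ha : Odd a) (m : ℕ) :
    a ^ (4 * m + 1) ≡ a [ZMOD 16] := by
  have h : a ^ 4 ≡ 1 [ZMOD 16] := (Int.modEq_iff_dvd.2 (Int.sixteen_dvd_pow_four_sub_one ha)).symm
  calc a ^ (4 * m + 1) = (a ^ 4) ^ m * a := by ring
    _ ≡ 1 ^ m * a [ZMOD 16] := (h.pow m).mul_right a
    _ = a := by ring

lemma Int.not_four_dvd_two_mul_sub_four_mul {a : ℤ} (ha : Odd a) (b : ℤ) :
    ¬ 4 ∣ 2 * a - 4 * b := by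
  obtain ⟨t, rfl⟩ := ha
  omega

theorem sixteen_not_dvd_general (p q k : ℕ) (hp : p.Prime) (hp4 : p % 4 = 1)
    (hk : Even k) (hq16 : q ^ 2 % 16 ≠ p % 16)
    (h1 : p ^ k < q) (h2 : q < 2 * p ^ k) :
    ¬ (16 : ℤ) ∣ ((p : ℤ) ^ (⌈Real.logb p ((q : ℝ) ^ 2)⌉.toNat) - (q : ℤ) ^ 2) ∧
    ¬ (16 : ℤ) ∣ (2 * (p : ℤ) ^ (⌈Real.logb p (2 * (q : ℝ) ^ 2)⌉.toNat) - 4 * (q : ℤ) ^ 2) := by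
  have hodd : Odd (p : ℤ) := (Nat.odd_iff.2 (by omega)).natCast
  refine ⟨fun hdvd => hq16 ?_, fun hdvd => ?_⟩
  · obtain ⟨m, rfl⟩ := hk
    have hexp : ⌈Real.logb p ((q : ℝ) ^ 2)⌉.toNat = 4 * m + 1 := by
      rw [← Nat.cast_pow, Real.ceil_logb_natCast_toNat,
        Nat.clog_sq_eq_of_lt_of_lt_two_mul (by have := hp.two_le; omega) h1 h2]
      ring
    rw [hexp] at hdvd
    have hmod : ((q ^ 2 : ℕ) : ℤ) ≡ p [ZMOD 16] := by
      push_cast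
      exact (Int.modEq_iff_dvd.2 hdvd).trans (Int.pow_four_mul_add_one_modEq_self hodd m)
    exact Int.natCast_modEq_iff.1 hmod
  · exact Int.not_four_dvd_two_mul_sub_four_mul hodd.pow _ ((by norm_num : (4 : ℤ) ∣ 16).trans hdvd)

/-- Let `p ≡ 1 (mod 4)` be prime, `k` even, and `q` a natural number with
`q ≡ 1 (mod 4)`, `q² ≢ p (mod 16)`, and `p^k < q < 2p^k`. Then
`16 ∤ p^⌈log_p(q²)⌉ − q²` and `16 ∤ 2p^⌈log_p(2q²)⌉ − 4q²`. -/
theorem sixteen_not_dvd (p q k : ℕ) (hp : p.Prime) (hp4 : p % 4 = 1)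
    (hk : Even k) (hq4 : q % 4 = 1) (hq16 : q ^ 2 % 16 ≠ p % 16)
    (h1 : p ^ k < q) (h2 : q < 2 * p ^ k) :
    ¬ (16 : ℤ) ∣ ((p : ℤ) ^ (⌈Real.logb p ((q : ℝ) ^ 2)⌉.toNat) - (q : ℤ) ^ 2) ∧
    ¬ (16 : ℤ) ∣ (2 * (p : ℤ) ^ (⌈Real.logb p (2 * (q : ℝ) ^ 2)⌉.toNat) - 4 * (q : ℤ) ^ 2) :=
  sixteen_not_dvd_general p q k hp hp4 hk hq16 h1 h2
end

section
/- For every positive integer n, the product over odd primes p with p² | n of (∑_{j=0}^{b_p} p^{-j}), where b_p = max{b : p^{2b} | n}, is at most (1/2)·log n + 1. -/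
/-!
With `D = ∏ p ^ b_p` over the primes in question, unique factorization expands the product of
geometric sums into `∑_{d ∣ D} 1/d`, which is at most the harmonic number `H_D ≤ 1 + log D`.
Since `D² ∣ n`, `log D ≤ (1/2) log n`.
-/

open Finset ArithmeticFunction

open scoped Function in
theorem Nat.sum_divisors_prod_prime_pow {R : Type*} [CommSemiring R] {f : ArithmeticFunction R}
    (hf : f.IsMultiplicative) {S : Finset ℕ} (hS : ∀ p ∈ S, p.Prime) (e : ℕ → ℕ) :
    ∑ d ∈ (∏ p ∈ S, p ^ e p).divisors, f d = ∏ p ∈ S, ∑ j ∈ range (e p + 1), f (p ^ j) := by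
  have hcop : (S : Set ℕ).Pairwise (Nat.Coprime on fun p => p ^ e p) := fun p hp q hq hpq =>
    .pow _ _ ((Nat.coprime_primes (hS p hp) (hS q hq)).mpr hpq)
  rw [← coe_mul_zeta_apply, (hf.mul isMultiplicative_zeta.natCast).map_prod _ S hcop]
  exact prod_congr rfl fun p hp => by rw [coe_mul_zeta_apply, Nat.sum_divisors_prime_pow (hS p hp)]

def ArithmeticFunction.natInv (K : Type*) [DivisionSemiring K] : ArithmeticFunction K :=
  ⟨fun d => (d : K)⁻¹, by simp⟩

theorem ArithmeticFunction.isMultiplicative_natInv (K : Type*) [Semifield K] :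
    (natInv K).IsMultiplicative :=
  ⟨by simp [natInv], fun {m k} _ => by simp [natInv, mul_comm]⟩

theorem Nat.sum_divisors_inv_le_one_add_log (D : ℕ) :
    ∑ d ∈ D.divisors, (d : ℝ)⁻¹ ≤ 1 + Real.log D :=
  calc ∑ d ∈ D.divisors, (d : ℝ)⁻¹ ≤ ∑ d ∈ Icc 1 D, (d : ℝ)⁻¹ :=
        sum_le_sum_of_subset_of_nonneg (fun d hd => mem_Icc.mpr
          ⟨Nat.pos_of_mem_divisors hd, Nat.divisor_le hd⟩) fun _ _ _ => by positivity
    _ = harmonic D := by simp [harmonic_eq_sum_Icc]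
    _ ≤ 1 + Real.log D := harmonic_le_one_add_log D

theorem Nat.prod_pow_dvd_of_subset_primeFactors {n : ℕ} {S : Finset ℕ} (hS : S ⊆ n.primeFactors)
    {e : ℕ → ℕ} (he : ∀ p ∈ S, e p ≤ n.factorization p) : ∏ p ∈ S, p ^ e p ∣ n := by
  rcases eq_or_ne n 0 with rfl | hn
  · exact dvd_zero _
  calc ∏ p ∈ S, p ^ e p ∣ ∏ p ∈ S, p ^ n.factorization p :=
        prod_dvd_prod_of_dvd _ _ fun p hp => pow_dvd_pow p (he p hp)
    _ ∣ ∏ p ∈ n.primeFactors, p ^ n.factorization p := prod_dvd_prod_of_subset _ _ _ hS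
    _ = n := Nat.prod_factorization_pow_eq_self hn

theorem Nat.sSup_setOf_pow_two_mul_dvd {p n : ℕ} (hp : p.Prime) (hn : n ≠ 0) :
    sSup {b : ℕ | p ^ (2 * b) ∣ n} = n.factorization p / 2 := by
  have : {b : ℕ | p ^ (2 * b) ∣ n} = Set.Iic (n.factorization p / 2) := by
    ext b
    simp [hp.pow_dvd_iff_le_factorization hn, Nat.le_div_iff_mul_le two_pos, mul_comm]
  rw [this, csSup_Iic]

/-- For every positive integer `n`, the product over odd primes `p` with
`p² ∣ n` of `∑_{j=0}^{b_p} p^{-j}`, where `b_p = max{b : p^(2b) ∣ n}`, is at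
most `(1/2)·log n + 1`. -/
theorem prod_geom_sum_le (n : ℕ) (hn : 0 < n) :
    ∏ p ∈ n.primeFactors.filter (fun p => Odd p ∧ p ^ 2 ∣ n),
      ∑ j ∈ range (sSup {b : ℕ | p ^ (2 * b) ∣ n} + 1), ((p : ℝ) ^ j)⁻¹
      ≤ (1 / 2) * Real.log n + 1 := by
  set S := n.primeFactors.filter (fun p => Odd p ∧ p ^ 2 ∣ n)
  have hS : S ⊆ n.primeFactors := filter_subset _ _
  have hprime : ∀ p ∈ S, p.Prime := fun p hp => Nat.prime_of_mem_primeFactors (hS hp)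
  set D := ∏ p ∈ S, p ^ (n.factorization p / 2)
  have hD : D ^ 2 ≤ n := by
    refine Nat.le_of_dvd hn ?_
    simp_rw [D, ← prod_pow, ← pow_mul]
    exact Nat.prod_pow_dvd_of_subset_primeFactors hS fun p _ => Nat.div_mul_le_self _ 2
  have hlog : Real.log D ≤ (1 / 2) * Real.log n := by
    have hDpos : 0 < D := prod_pos fun p hp => pow_pos (hprime p hp).pos _
    have := Real.log_le_log (by positivity) (show ((D ^ 2 : ℕ) : ℝ) ≤ n by exact_mod_cast hD)
    rw [Nat.cast_pow, Real.log_pow, Nat.cast_ofNat] at this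
    linarith
  calc _ = ∏ p ∈ S, ∑ j ∈ range (n.factorization p / 2 + 1), ((p : ℝ) ^ j)⁻¹ :=
        prod_congr rfl fun p hp => by rw [Nat.sSup_setOf_pow_two_mul_dvd (hprime p hp) hn.ne']
    _ = ∑ d ∈ D.divisors, (d : ℝ)⁻¹ := by
        simpa [natInv] using (Nat.sum_divisors_prod_prime_pow (isMultiplicative_natInv ℝ)
          hprime (fun p => n.factorization p / 2)).symm
    _ ≤ 1 + Real.log D := Nat.sum_divisors_inv_le_one_add_log D
    _ ≤ _ := by linarith
end
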